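/- arXiv:1709.02552 — 2 statements merged into one kernel-verified Lean document; each statement's English description precedes it below -/
import Mathlib

section
/- Let T be a finite tree of even diameter d and let f be a proper 2-coloring of T, i.e., a function from the vertices of T to Bool with f(u) ≠ f(v) whenever u and v are adjacent. If some diameter path (a_0, …, a_d) of T satisfies f(a_0) = f(a_d) = true, then every diameter path (b_0, …, b_d) of T satisfies f(b_0) = f(b_d) = true. -/
/-- A path of length `t` in a simple graph `G`: a sequence of `t+1` pairwise distinct
vertices in which consecutive vertices are adjacent. -/
def IsPathSeq {V : Type*} (G : SimpleGraph V) (t : ℕ) (a : Fin (t + 1) → V) : Prop :=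
  Function.Injective a ∧ ∀ i : Fin t, G.Adj (a i.castSucc) (a i.succ)

/-- A diameter path of `G`: a path whose length is maximal among all paths of `G`. -/
def IsDiamPath {V : Type*} (G : SimpleGraph V) (d : ℕ) (a : Fin (d + 1) → V) : Prop :=
  IsPathSeq G d a ∧ ∀ (t : ℕ) (b : Fin (t + 1) → V), IsPathSeq G t b → t ≤ d


namespace DiamAux

variable {V : Type*} {G : SimpleGraph V}

lemma getVert_mem_support {u v : V} (p : G.Walk u v) (i : ℕ) :
    p.getVert i ∈ p.support := by
  induction p generalizing i with
  | nil => simp [SimpleGraph.Walk.getVert]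
  | cons h q ih =>
    cases i with
    | zero => simp [SimpleGraph.Walk.getVert]
    | succ n => simp only [SimpleGraph.Walk.getVert_cons_succ, SimpleGraph.Walk.support_cons,
        List.mem_cons]; exact Or.inr (ih n)

lemma getVert_inj {u v : V} {p : G.Walk u v} (hp : p.IsPath) :
    ∀ {i j : ℕ}, i ≤ p.length → j ≤ p.length → p.getVert i = p.getVert j → i = j := by
  induction p with
  | nil => intro i j hi hj _; simp at hi hj; omega
  | cons h q ih =>
    rw [SimpleGraph.Walk.cons_isPath_iff] at hp
    intro i j hi hj hij
    cases i with
    | zero =>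
      cases j with
      | zero => rfl
      | succ n =>
        exfalso
        rw [SimpleGraph.Walk.getVert_zero, SimpleGraph.Walk.getVert_cons_succ] at hij
        exact hp.2 (hij ▸ getVert_mem_support q n)
    | succ m =>
      cases j with
      | zero =>
        exfalso
        rw [SimpleGraph.Walk.getVert_zero, SimpleGraph.Walk.getVert_cons_succ] at hij
        exact hp.2 (hij ▸ getVert_mem_support q m)
      | succ n =>
        rw [SimpleGraph.Walk.getVert_cons_succ, SimpleGraph.Walk.getVert_cons_succ] at hij
        simp only [SimpleGraph.Walk.length_cons] at hi hj
        exact congrArg Nat.succ (ih hp.1 (by omega) (by omega) hij)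

lemma color_walk (f : V → Bool) (hf : ∀ u v : V, G.Adj u v → f u ≠ f v)
    {u v : V} (p : G.Walk u v) : (f u = f v) ↔ Even p.length := by
  induction p with
  | nil => simp
  | @cons x y z h q ih =>
    have hne := hf _ _ h
    rw [SimpleGraph.Walk.length_cons, Nat.even_add_one, ← ih]
    cases h1 : f x <;> cases h2 : f y <;> cases h3 : f z <;> simp_all

/-- a walk built from a ℕ-indexed adjacency chain -/
def seqWalk (G : SimpleGraph V) : ∀ (t : ℕ) (b : ℕ → V), (∀ i < t, G.Adj (b i) (b (i+1))) →
    G.Walk (b 0) (b t)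
  | 0, _, _ => SimpleGraph.Walk.nil
  | (t+1), b, h =>
    SimpleGraph.Walk.cons (h 0 (Nat.succ_pos t))
      (seqWalk G t (fun n => b (n+1)) (fun i hi => h (i+1) (by omega)))

lemma seqWalk_length (t : ℕ) (b : ℕ → V) (h : ∀ i < t, G.Adj (b i) (b (i+1))) :
    (seqWalk G t b h).length = t := by
  induction t generalizing b with
  | zero => rfl
  | succ n ih => simp [seqWalk, ih]

lemma seqWalk_support (t : ℕ) (b : ℕ → V) (h : ∀ i < t, G.Adj (b i) (b (i+1))) :
    (seqWalk G t b h).support = (List.range (t+1)).map b := by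
  induction t generalizing b with
  | zero => simp [seqWalk, List.range_succ]
  | succ n ih =>
    simp only [seqWalk, SimpleGraph.Walk.support_cons, ih]
    rw [@List.range_succ_eq_map (n+1), List.map_cons, List.map_map]
    rfl

lemma seqWalk_isPath (t : ℕ) (b : ℕ → V) (h : ∀ i < t, G.Adj (b i) (b (i+1)))
    (hinj : ∀ i ≤ t, ∀ j ≤ t, b i = b j → i = j) : (seqWalk G t b h).IsPath := by
  rw [SimpleGraph.Walk.isPath_def, seqWalk_support]
  apply List.Nodup.map_on _ List.nodup_range
  intro i hi j hj hij
  rw [List.mem_range] at hi hj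
  exact hinj i (by omega) j (by omega) hij



lemma path_length_eq_dist (hconn : G.Connected) (hacyc : G.IsAcyclic)
    {u v : V} {p : G.Walk u v} (hp : p.IsPath) : p.length = G.dist u v := by
  obtain ⟨q, hq, hlen⟩ := hconn.exists_path_of_dist u v
  have h := hacyc.path_unique ⟨p, hp⟩ ⟨q, hq⟩
  have hpq : p = q := congrArg Subtype.val h
  rw [hpq, hlen]

lemma split_dist (hconn : G.Connected) (hacyc : G.IsAcyclic)
    {u v m : V} {p : G.Walk u v} (hp : p.IsPath) (hm : m ∈ p.support) :
    G.dist u m + G.dist m v = p.length := by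
  classical
  rw [← path_length_eq_dist hconn hacyc (hp.takeUntil hm),
    ← path_length_eq_dist hconn hacyc (hp.dropUntil hm)]
  have := congrArg SimpleGraph.Walk.length (p.take_spec hm)
  rwa [SimpleGraph.Walk.length_append] at this

lemma two_on_path (hconn : G.Connected) (hacyc : G.IsAcyclic)
    {x y u v : V} {p : G.Walk x y} (hp : p.IsPath) (hu : u ∈ p.support) (hv : v ∈ p.support) :
    G.dist x u + G.dist u v + G.dist v y = p.length ∨
    G.dist x v + G.dist v u + G.dist u y = p.length := by
  classical
  have hsplit := split_dist hconn hacyc hp hu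
  have hv' := hv
  rw [← p.take_spec hu, SimpleGraph.Walk.mem_support_append_iff] at hv'
  rcases hv' with hv1 | hv2
  · right
    have h2 := split_dist hconn hacyc (hp.takeUntil hu) hv1
    rw [path_length_eq_dist hconn hacyc (hp.takeUntil hu)] at h2
    omega
  · left
    have h2 := split_dist hconn hacyc (hp.dropUntil hu) hv2
    rw [path_length_eq_dist hconn hacyc (hp.dropUntil hu)] at h2
    omega

lemma isPath_append {u v w : V} {p : G.Walk u v} {q : G.Walk v w} (hp : p.IsPath) (hq : q.IsPath)
    (hmeet : ∀ x, x ∈ p.support → x ∈ q.support → x = v) : (p.append q).IsPath := by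
  rw [SimpleGraph.Walk.isPath_def, SimpleGraph.Walk.support_append]
  have hq' : (v :: q.support.tail).Nodup := q.support_eq_cons ▸ hq.support_nodup
  refine List.Nodup.append hp.support_nodup (List.nodup_cons.mp hq').2 ?_
  intro x hxp hxt
  have hxq : x ∈ q.support := q.support_eq_cons ▸ List.mem_cons_of_mem v hxt
  have := hmeet x hxp hxq
  subst this
  exact (List.nodup_cons.mp hq').1 hxt

lemma first_meet {z x : V} (R : G.Walk z x) (hR : R.IsPath) (S : Set V) (hx : x ∈ S) :
    ∃ m ∈ S, ∃ R1 : G.Walk z m, R1.IsPath ∧ R1.support ⊆ R.support ∧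
      (∀ w ∈ R1.support, w ∈ S → w = m) := by
  classical
  induction R with
  | nil =>
    exact ⟨_, hx, SimpleGraph.Walk.nil, SimpleGraph.Walk.IsPath.nil, by simp, by simp⟩
  | @cons a b c h q ih =>
    by_cases hz : a ∈ S
    · exact ⟨a, hz, SimpleGraph.Walk.nil, SimpleGraph.Walk.IsPath.nil, by simp, by simp⟩
    · rw [SimpleGraph.Walk.cons_isPath_iff] at hR
      obtain ⟨m, hm, R1, hR1, hsub, hmeet⟩ := ih hR.1 hx
      refine ⟨m, hm, SimpleGraph.Walk.cons h R1, ?_, ?_, ?_⟩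
      · rw [SimpleGraph.Walk.cons_isPath_iff]
        exact ⟨hR1, fun hc => hR.2 (hsub hc)⟩
      · intro w hw
        rw [SimpleGraph.Walk.support_cons, List.mem_cons] at hw
        rcases hw with rfl | hw
        · exact SimpleGraph.Walk.start_mem_support _
        · exact List.mem_cons_of_mem _ (hsub hw)
      · intro w hw hwP
        rw [SimpleGraph.Walk.support_cons, List.mem_cons] at hw
        rcases hw with rfl | hw
        · exact absurd hwP hz
        · exact hmeet w hw hwP

lemma median (hconn : G.Connected) (hacyc : G.IsAcyclic)
    {x y : V} (P : G.Walk x y) (hP : P.IsPath) (z : V) :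
    ∃ m ∈ P.support, G.dist z m + G.dist m x = G.dist z x ∧
      G.dist z m + G.dist m y = G.dist z y := by
  classical
  obtain ⟨R, hR, _⟩ := hconn.exists_path_of_dist z x
  obtain ⟨m, hm, R1, hR1, hsub, hmeet⟩ :=
    first_meet R hR {w | w ∈ P.support} P.start_mem_support
  refine ⟨m, hm, ?_, ?_⟩
  · have htu := hP.takeUntil hm
    have happ : (R1.append (P.takeUntil m hm).reverse).IsPath := by
      refine isPath_append hR1 htu.reverse ?_
      intro w hw1 hw2
      rw [SimpleGraph.Walk.support_reverse, List.mem_reverse] at hw2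
      exact hmeet w hw1 (SimpleGraph.Walk.support_takeUntil_subset _ hm hw2)
    have hlen := path_length_eq_dist hconn hacyc happ
    rw [SimpleGraph.Walk.length_append, SimpleGraph.Walk.length_reverse,
      path_length_eq_dist hconn hacyc hR1, path_length_eq_dist hconn hacyc htu] at hlen
    rw [SimpleGraph.dist_comm (u := m) (v := x), ← hlen]
  · have hdu := hP.dropUntil hm
    have happ : (R1.append (P.dropUntil m hm)).IsPath := by
      refine isPath_append hR1 hdu ?_
      intro w hw1 hw2
      exact hmeet w hw1 (SimpleGraph.Walk.support_dropUntil_subset _ hm hw2)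
    have hlen := path_length_eq_dist hconn hacyc happ
    rw [SimpleGraph.Walk.length_append,
      path_length_eq_dist hconn hacyc hR1, path_length_eq_dist hconn hacyc hdu] at hlen
    rw [← hlen]

lemma pathseq_walk {t : ℕ} {b : Fin (t+1) → V}
    (hb : Function.Injective b) (hadjb : ∀ i : Fin t, G.Adj (b i.castSucc) (b i.succ)) :
    ∃ P : G.Walk (b ⟨0, Nat.succ_pos t⟩) (b ⟨t, Nat.lt_succ_self t⟩), P.IsPath ∧ P.length = t := by
  set c : ℕ → V := fun n => b ⟨min n t, by omega⟩ with hc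
  have hcv : ∀ i : ℕ, i ≤ t → ∀ h : i < t + 1, c i = b ⟨i, h⟩ := by
    intro i hi h
    exact congrArg b (Fin.ext (by simp [hc, Nat.min_eq_left hi]))
  have hadj : ∀ i, i < t → G.Adj (c i) (c (i+1)) := by
    intro i hi
    rw [hcv i (by omega) (by omega), hcv (i+1) (by omega) (by omega)]
    exact hadjb ⟨i, hi⟩
  refine ⟨(seqWalk G t c hadj).copy (hcv 0 (by omega) _) (hcv t le_rfl _), ?_, ?_⟩
  · rw [SimpleGraph.Walk.isPath_copy]
    refine seqWalk_isPath t c hadj ?_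
    intro i hi j hj hij
    rw [hcv i hi (by omega), hcv j hj (by omega)] at hij
    exact congrArg Fin.val (hb hij)
  · rw [SimpleGraph.Walk.length_copy, seqWalk_length]

end DiamAux

/-- Let `T` be a finite tree of even diameter `d`, and `f` a proper 2-coloring of `T`.
If one diameter path has both endpoints colored `true`, then every diameter path has
both endpoints colored `true`. -/
theorem diamPaths_endpoints_same_color {V : Type*} [Fintype V] (G : SimpleGraph V)
    (hconn : G.Connected) (hacyc : G.IsAcyclic)
    (d : ℕ) (hd : Even d)
    (f : V → Bool) (hf : ∀ u v : V, G.Adj u v → f u ≠ f v)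
    (a : Fin (d + 1) → V) (ha : IsDiamPath G d a)
    (ha0 : f (a ⟨0, by omega⟩) = true) (had : f (a ⟨d, by omega⟩) = true) :
    ∀ b : Fin (d + 1) → V, IsDiamPath G d b →
      f (b ⟨0, by omega⟩) = true ∧ f (b ⟨d, by omega⟩) = true := by
  intro b hb
  classical
  have hle : ∀ u v : V, G.dist u v ≤ d := by
    intro u v
    obtain ⟨p, hp, hlen⟩ := hconn.exists_path_of_dist u v
    have hseq : IsPathSeq G p.length (fun i : Fin (p.length + 1) => p.getVert i) := by
      constructor
      · intro i j hij
        exact Fin.ext (DiamAux.getVert_inj hp (Nat.lt_succ_iff.mp i.2)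
          (Nat.lt_succ_iff.mp j.2) hij)
      · intro i
        exact p.adj_getVert_succ i.2
    have := ha.2 p.length _ hseq
    omega
  have hparity : ∀ u v : V, Even (G.dist u v) → f u = f v := by
    intro u v he
    obtain ⟨p, hp, hlen⟩ := hconn.exists_path_of_dist u v
    exact (DiamAux.color_walk f hf p).mpr (by rw [hlen]; exact he)
  obtain ⟨P, hP, hPlen⟩ := DiamAux.pathseq_walk ha.1.1 ha.1.2
  obtain ⟨Q, hQ, hQlen⟩ := DiamAux.pathseq_walk hb.1.1 hb.1.2
  have hdA : G.dist (a ⟨0, Nat.succ_pos d⟩) (a ⟨d, Nat.lt_succ_self d⟩) = d := by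
    rw [← DiamAux.path_length_eq_dist hconn hacyc hP, hPlen]
  have hdB : G.dist (b ⟨0, Nat.succ_pos d⟩) (b ⟨d, Nat.lt_succ_self d⟩) = d := by
    rw [← DiamAux.path_length_eq_dist hconn hacyc hQ, hQlen]
  obtain ⟨m, hm, hm1, hm2⟩ := DiamAux.median hconn hacyc P hP (b ⟨0, Nat.succ_pos d⟩)
  obtain ⟨m', hm', hn1, hn2⟩ := DiamAux.median hconn hacyc P hP (b ⟨d, Nat.lt_succ_self d⟩)
  have hsm : G.dist (a ⟨0, Nat.succ_pos d⟩) m + G.dist m (a ⟨d, Nat.lt_succ_self d⟩) = d := by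
    rw [DiamAux.split_dist hconn hacyc hP hm, hPlen]
  have hsm' : G.dist (a ⟨0, Nat.succ_pos d⟩) m' + G.dist m' (a ⟨d, Nat.lt_succ_self d⟩) = d := by
    rw [DiamAux.split_dist hconn hacyc hP hm', hPlen]
  have htwo := DiamAux.two_on_path hconn hacyc hP hm hm'
  rw [hPlen] at htwo
  have t1 : G.dist (b ⟨0, Nat.succ_pos d⟩) (b ⟨d, Nat.lt_succ_self d⟩) ≤
      G.dist (b ⟨0, Nat.succ_pos d⟩) m + G.dist m (b ⟨d, Nat.lt_succ_self d⟩) :=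
    hconn.dist_triangle
  have t2 : G.dist m (b ⟨d, Nat.lt_succ_self d⟩) ≤
      G.dist m m' + G.dist m' (b ⟨d, Nat.lt_succ_self d⟩) := hconn.dist_triangle
  have c1 : G.dist m (a ⟨0, Nat.succ_pos d⟩) = G.dist (a ⟨0, Nat.succ_pos d⟩) m :=
    SimpleGraph.dist_comm
  have c2 : G.dist m' (a ⟨0, Nat.succ_pos d⟩) = G.dist (a ⟨0, Nat.succ_pos d⟩) m' :=
    SimpleGraph.dist_comm
  have c3 : G.dist m' m = G.dist m m' := SimpleGraph.dist_comm
  have c4 : G.dist m' (b ⟨d, Nat.lt_succ_self d⟩) =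
      G.dist (b ⟨d, Nat.lt_succ_self d⟩) m' := SimpleGraph.dist_comm
  have c5 : G.dist m (b ⟨0, Nat.succ_pos d⟩) = G.dist (b ⟨0, Nat.succ_pos d⟩) m :=
    SimpleGraph.dist_comm
  have hub1 : G.dist (b ⟨0, Nat.succ_pos d⟩) (a ⟨0, Nat.succ_pos d⟩) ≤ d := hle _ _
  have hub2 : G.dist (b ⟨0, Nat.succ_pos d⟩) (a ⟨d, Nat.lt_succ_self d⟩) ≤ d := hle _ _
  have hub3 : G.dist (b ⟨d, Nat.lt_succ_self d⟩) (a ⟨0, Nat.succ_pos d⟩) ≤ d := hle _ _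
  have hub4 : G.dist (b ⟨d, Nat.lt_succ_self d⟩) (a ⟨d, Nat.lt_succ_self d⟩) ≤ d := hle _ _
  have key : (G.dist (b ⟨0, Nat.succ_pos d⟩) (a ⟨0, Nat.succ_pos d⟩) = d ∧
        G.dist (b ⟨d, Nat.lt_succ_self d⟩) (a ⟨d, Nat.lt_succ_self d⟩) = d) ∨
      (G.dist (b ⟨0, Nat.succ_pos d⟩) (a ⟨d, Nat.lt_succ_self d⟩) = d ∧
        G.dist (b ⟨d, Nat.lt_succ_self d⟩) (a ⟨0, Nat.succ_pos d⟩) = d) := by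
    omega
  have goal0 : f (b ⟨0, Nat.succ_pos d⟩) = true ∧ f (b ⟨d, Nat.lt_succ_self d⟩) = true := by
    rcases key with ⟨k1, k2⟩ | ⟨k1, k2⟩
    · exact ⟨(hparity _ _ (by rw [k1]; exact hd)).trans ha0,
        (hparity _ _ (by rw [k2]; exact hd)).trans had⟩
    · exact ⟨(hparity _ _ (by rw [k1]; exact hd)).trans had,
        (hparity _ _ (by rw [k2]; exact hd)).trans ha0⟩
  exact goal0
end

section
/- Let T be a finite tree, let (a_0, …, a_d) be a diameter path of T, let x be a vertex of T, and let i be an index with 0 ≤ i ≤ d such that dist(x, a_i) = min over 0 ≤ k ≤ d of dist(x, a_k) (i.e., a_i is a closest vertex of the diameter path to x). Then dist(x, a_i) ≤ min(i, d − i). -/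
lemma dist_getVert_le' {V : Type*} {G : SimpleGraph V} (hconn : G.Connected)
    {u v : V} (p : G.Walk u v) (j : ℕ) : G.dist u (p.getVert j) ≤ j := by
  induction p generalizing j with
  | nil => simp [SimpleGraph.Walk.getVert, SimpleGraph.dist_self]
  | @cons u b v h q ih =>
    cases j with
    | zero => simp
    | succ j =>
      rw [SimpleGraph.Walk.getVert_cons_succ]
      calc G.dist u (q.getVert j) ≤ G.dist u b + G.dist b (q.getVert j) :=
            hconn.dist_triangle
        _ ≤ 1 + j := by
            have h1 : G.dist u b ≤ 1 := by
              simpa using SimpleGraph.dist_le (SimpleGraph.Walk.cons h SimpleGraph.Walk.nil)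
            exact Nat.add_le_add h1 (ih j)
        _ = j + 1 := Nat.add_comm 1 j

lemma dist_getVert_eq' {V : Type*} {G : SimpleGraph V} (hconn : G.Connected)
    {u v : V} (p : G.Walk u v) (hp : p.length = G.dist u v) {j : ℕ} (hj : j ≤ p.length) :
    G.dist u (p.getVert j) = j := by
  have h1 : G.dist u (p.getVert j) ≤ j := dist_getVert_le' hconn p j
  have h2 : G.dist v (p.getVert j) ≤ p.length - j := by
    have : p.reverse.getVert (p.length - j) = p.getVert j := by
      rw [SimpleGraph.Walk.getVert_reverse]
      congr 1
      omega
    rw [← this]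
    exact dist_getVert_le' hconn p.reverse _
  have h3 : G.dist u v ≤ G.dist u (p.getVert j) + G.dist (p.getVert j) v :=
    hconn.dist_triangle
  rw [SimpleGraph.dist_comm (u := p.getVert j) (v := v)] at h3
  omega

lemma aux_diamPath {V : Type*} (G : SimpleGraph V)
    (hconn : G.Connected)
    (d : ℕ) (a : Fin (d + 1) → V) (ha : IsDiamPath G d a)
    (x : V) (i : Fin (d + 1))
    (hi : ∀ k : Fin (d + 1), G.dist x (a i) ≤ G.dist x (a k)) :
    G.dist x (a i) ≤ i.val := by
  have hid : i.val ≤ d := Nat.lt_succ_iff.mp i.isLt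
  obtain ⟨p, hp⟩ := hconn.exists_walk_length_eq_dist x (a i)
  set r := G.dist x (a i) with hr
  set t := r + (d - i.val) with htdef
  let b : Fin (t + 1) → V := fun j =>
    if h : j.val ≤ r then p.getVert j.val
    else a ⟨i.val + (j.val - r), by have := j.isLt; omega⟩
  have hbval1 : ∀ j : Fin (t + 1), j.val ≤ r → b j = p.getVert j.val := by
    intro j h
    simp only [b]
    rw [dif_pos h]
  have hbval2 : ∀ (j : Fin (t + 1)) (hle : r ≤ j.val)
      (hc : i.val + (j.val - r) < d + 1), b j = a ⟨i.val + (j.val - r), hc⟩ := by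
    intro j hle hc
    rcases Nat.eq_or_lt_of_le hle with h | h
    · rw [hbval1 j h.ge]
      have h1 : p.getVert j.val = a i := by
        rw [← h, ← hp]
        exact p.getVert_length
      rw [h1]
      congr 1
      exact Fin.ext (by simp [← h])
    · simp only [b]
      rw [dif_neg (by omega)]
  have hd1 : ∀ j : Fin (t + 1), j.val ≤ r → G.dist x (b j) = j.val := by
    intro j hj
    rw [hbval1 j hj]
    exact dist_getVert_eq' hconn p hp (by omega)
  have hmix : ∀ (j j' : Fin (t + 1)), j.val ≤ r → r < j'.val → b j ≠ b j' := by
    intro j j' hj hj' heq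
    have hc : i.val + (j'.val - r) < d + 1 := by have := j'.isLt; omega
    rw [hbval1 j hj, hbval2 j' (le_of_lt hj') hc] at heq
    have h1 : G.dist x (p.getVert j.val) = j.val := dist_getVert_eq' hconn p hp (by omega)
    have h2 : r ≤ G.dist x (a ⟨i.val + (j'.val - r), hc⟩) := hi _
    rw [← heq, h1] at h2
    have hjr : j.val = r := le_antisymm hj h2
    have h3 : p.getVert j.val = a i := by
      rw [hjr, ← hp]
      exact p.getVert_length
    rw [h3] at heq
    have h4 := ha.1.1 heq
    have h5 : i.val = i.val + (j'.val - r) := congrArg Fin.val h4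
    omega
  have key : t ≤ d := by
    apply ha.2 t b
    constructor
    · intro j j' heq
      by_cases h1 : j.val ≤ r <;> by_cases h2 : j'.val ≤ r
      · have e1 := hd1 j h1
        have e2 := hd1 j' h2
        rw [heq] at e1
        exact Fin.ext (by omega)
      · exact absurd heq (hmix j j' h1 (by omega))
      · exact absurd heq.symm (hmix j' j h2 (by omega))
      · have hc1 : i.val + (j.val - r) < d + 1 := by have := j.isLt; omega
        have hc2 : i.val + (j'.val - r) < d + 1 := by have := j'.isLt; omega
        rw [hbval2 j (by omega) hc1, hbval2 j' (by omega) hc2] at heq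
        have h4 := ha.1.1 heq
        have h5 := congrArg Fin.val h4
        simp only at h5
        exact Fin.ext (by omega)
    · intro m
      have hmt : m.val < t := m.isLt
      by_cases hm : m.val + 1 ≤ r
      · rw [hbval1 m.castSucc (by simpa using Nat.le_of_succ_le hm),
          hbval1 m.succ (by simpa using hm)]
        simp only [Fin.coe_castSucc, Fin.val_succ]
        exact p.adj_getVert_succ (by omega)
      · have hm1 : r ≤ m.val := by omega
        have hc1 : i.val + ((m.castSucc : Fin (t+1)).val - r) < d + 1 := by
          simp only [Fin.coe_castSucc]; omega
        have hc2 : i.val + ((m.succ : Fin (t+1)).val - r) < d + 1 := by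
          simp only [Fin.val_succ]; omega
        rw [hbval2 m.castSucc (by simpa using hm1) hc1,
          hbval2 m.succ (by simp only [Fin.val_succ]; omega) hc2]
        have hlt : i.val + (m.val - r) < d := by omega
        have h := ha.1.2 ⟨i.val + (m.val - r), hlt⟩
        simp only [Fin.castSucc_mk, Fin.succ_mk] at h
        simp only [Fin.coe_castSucc, Fin.val_succ]
        convert h using 3 <;> omega
  omega

/-- If `(a_0, …, a_d)` is a diameter path of a finite tree, `x` a vertex, and `a_i` a
closest vertex of the diameter path to `x`, then `dist x a_i ≤ min i (d - i)`. -/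
theorem dist_to_closest_on_diamPath {V : Type*} [Fintype V] (G : SimpleGraph V)
    (hconn : G.Connected) (hacyc : G.IsAcyclic)
    (d : ℕ) (a : Fin (d + 1) → V) (ha : IsDiamPath G d a)
    (x : V) (i : Fin (d + 1))
    (hi : ∀ k : Fin (d + 1), G.dist x (a i) ≤ G.dist x (a k)) :
    G.dist x (a i) ≤ min i.val (d - i.val) := by
  have hid : i.val ≤ d := Nat.lt_succ_iff.mp i.isLt
  have h1 : G.dist x (a i) ≤ i.val := aux_diamPath G hconn d a ha x i hi
  let a' : Fin (d + 1) → V := fun k => a ⟨d - k.val, by omega⟩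
  have ha' : IsDiamPath G d a' := by
    refine ⟨⟨?_, ?_⟩, fun t b hb => ha.2 t b hb⟩
    · intro k k' h
      simp only [a'] at h
      have h2 := congrArg Fin.val (ha.1.1 h)
      simp only at h2
      have := k.isLt
      have := k'.isLt
      exact Fin.ext (by omega)
    · intro m
      have hm : m.val < d := m.isLt
      simp only [a']
      have h := (ha.1.2 ⟨d - m.val - 1, by omega⟩).symm
      simp only [Fin.castSucc_mk, Fin.succ_mk] at h
      simp only [Fin.coe_castSucc, Fin.val_succ]
      convert h using 3 <;> omega
  let i' : Fin (d + 1) := ⟨d - i.val, by omega⟩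
  have hai' : a' i' = a i := by
    simp only [a', i']
    congr 1
    exact Fin.ext (by simp; omega)
  have hi' : ∀ k : Fin (d + 1), G.dist x (a' i') ≤ G.dist x (a' k) := by
    intro k
    rw [hai']
    exact hi _
  have h2 := aux_diamPath G hconn d a' ha' x i' hi'
  rw [hai'] at h2
  exact le_min h1 h2
end
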